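/- arXiv:2109.02745 — 3 statements merged into one kernel-verified Lean document; each statement's English description precedes it below -/
import Mathlib

section
/- Let q : 𝔻 → 𝔻 be a holomorphic self-map of the unit disc with q'(0) = 0. Then |q''(0)| ≤ 2(1 - |q(0)|²). -/
open Complex Metric

section SchwarzPickAux
open Complex Metric Set Filter
open scoped NNReal

lemma cauchy_second_deriv_bound {f : ℂ → ℂ}
    (hd : ∀ z ∈ ball (0 : ℂ) 1, DifferentiableAt ℂ f z)
    (hb : ∀ z ∈ ball (0 : ℂ) 1, ‖f z‖ ≤ 1) :
    ‖iteratedDeriv 2 f 0‖ ≤ 2 := by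
  have key : ∀ r : ℝ≥0, 0 < r → (r : ℝ) < 1 → ‖iteratedDeriv 2 f 0‖ ≤ 2 / (r : ℝ) ^ 2 := by
    intro r hr0 hr1
    have hsub : closedBall (0 : ℂ) r ⊆ ball (0 : ℂ) 1 := by
      intro z hz
      rw [mem_closedBall_zero_iff] at hz
      exact mem_ball_zero_iff.2 (lt_of_le_of_lt hz hr1)
    have hdo : DifferentiableOn ℂ f (closedBall (0 : ℂ) r) :=
      fun z hz => (hd z (hsub hz)).differentiableWithinAt
    have h := hdo.hasFPowerSeriesOnBall hr0
    set p := cauchyPowerSeries f 0 r with hp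
    have hfac := h.factorial_smul (1 : ℂ) 2
    have hiter : iteratedDeriv 2 f 0 = (Nat.factorial 2) • p 2 (fun _ => (1 : ℂ)) := by
      rw [hfac, iteratedDeriv_eq_iteratedFDeriv]
    have hint : (∫ θ : ℝ in (0)..2 * Real.pi, ‖f (circleMap 0 r θ)‖) ≤ 2 * Real.pi := by
      have hcont : Continuous fun θ : ℝ => ‖f (circleMap 0 (r : ℝ) θ)‖ := by
        refine continuous_norm.comp (continuous_iff_continuousAt.2 fun θ => ?_)
        exact ((hd _ (hsub (by simp [mem_closedBall_zero_iff, _root_.abs_of_nonneg r.2]))).continuousAt).comp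
          (continuous_circleMap 0 r).continuousAt
      calc (∫ θ : ℝ in (0)..2 * Real.pi, ‖f (circleMap 0 r θ)‖)
          ≤ ∫ _ : ℝ in (0)..2 * Real.pi, (1 : ℝ) := by
            refine intervalIntegral.integral_mono_on Real.two_pi_pos.le
              (hcont.intervalIntegrable _ _) (intervalIntegrable_const) fun θ _ => ?_
            exact hb _ (hsub (by simp [mem_closedBall_zero_iff, _root_.abs_of_nonneg r.2]))
        _ = 2 * Real.pi := by simp
    have hnorm : ‖p 2‖ ≤ (r : ℝ)⁻¹ ^ 2 := by
      refine (norm_cauchyPowerSeries_le f 0 r 2).trans ?_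
      rw [_root_.abs_of_nonneg r.coe_nonneg]
      have h2pi : (0:ℝ) < 2 * Real.pi := Real.two_pi_pos
      have : (2 * Real.pi)⁻¹ * ∫ θ : ℝ in (0)..2 * Real.pi, ‖f (circleMap 0 r θ)‖ ≤ 1 := by
        rw [inv_mul_le_iff₀ h2pi, mul_one]
        exact hint
      nlinarith [pow_nonneg (inv_nonneg.2 r.2) 2, this,
        mul_le_mul_of_nonneg_right this (pow_nonneg (inv_nonneg.2 r.2) 2)]
    rw [hiter]
    have h1 : ‖p 2 (fun _ => (1 : ℂ))‖ ≤ ‖p 2‖ := by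
      have := (p 2).le_opNorm (fun _ => (1 : ℂ))
      simpa using this
    calc ‖(Nat.factorial 2) • p 2 (fun _ => (1 : ℂ))‖ = 2 * ‖p 2 (fun _ => (1 : ℂ))‖ := by
          simp [Nat.factorial, norm_smul]
      _ ≤ 2 * (r : ℝ)⁻¹ ^ 2 := by nlinarith [h1.trans hnorm, norm_nonneg (p 2 (fun _ => (1:ℂ)))]
      _ = 2 / (r : ℝ) ^ 2 := by rw [div_eq_mul_inv, inv_pow]
  have hlim : Tendsto (fun r : ℝ => 2 / r ^ 2) (nhdsWithin 1 (Iio 1)) (nhds 2) := by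
    have : Tendsto (fun r : ℝ => 2 / r ^ 2) (nhds 1) (nhds (2 / 1 ^ 2)) := by
      apply Tendsto.div tendsto_const_nhds (by exact (continuous_pow 2).tendsto 1) (by norm_num)
    simpa using this.mono_left nhdsWithin_le_nhds
  refine ge_of_tendsto hlim ?_
  filter_upwards [Ioo_mem_nhdsLT_of_mem (⟨(by norm_num : (1:ℝ)/2 < 1), le_rfl⟩ :
    (1:ℝ) ∈ Set.Ioc (1/2) 1)] with r hr
  have hr0 : (0:ℝ) < r := by linarith [hr.1]
  exact key ⟨r, hr0.le⟩ (by exact_mod_cast hr0) hr.2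

lemma mobius_norm_le {a w : ℂ} (ha : ‖a‖ < 1) (hw : ‖w‖ < 1) :
    ‖w - a‖ ≤ ‖1 - (starRingEnd ℂ) a * w‖ := by
  have hsq : normSq (1 - (starRingEnd ℂ) a * w) - normSq (w - a)
      = (1 - normSq a) * (1 - normSq w) := by
    simp only [normSq_apply, Complex.sub_re, Complex.sub_im, Complex.mul_re, Complex.mul_im,
      Complex.conj_re, Complex.conj_im, Complex.one_re, Complex.one_im]
    ring
  have h1 : normSq a < 1 := by
    rw [← Complex.sq_norm]; nlinarith [norm_nonneg a]
  have h2 : normSq w < 1 := by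
    rw [← Complex.sq_norm]; nlinarith [norm_nonneg w]
  have hle : normSq (w - a) ≤ normSq (1 - (starRingEnd ℂ) a * w) := by nlinarith
  have := Real.sqrt_le_sqrt hle
  simpa [Complex.norm_def] using this

end SchwarzPickAux

/-- Schwarz–Pick type estimate: a holomorphic self-map `q` of the unit disc
with `q'(0) = 0` satisfies `|q''(0)| ≤ 2(1 - |q(0)|²)`. -/
theorem schwarz_pick_second_deriv (q : ℂ → ℂ)
    (hdiff : ∀ z ∈ ball (0 : ℂ) 1, DifferentiableAt ℂ q z)
    (hmap : ∀ z ∈ ball (0 : ℂ) 1, q z ∈ ball (0 : ℂ) 1)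
    (hq' : deriv q 0 = 0) :
    ‖iteratedDeriv 2 q 0‖ ≤ 2 * (1 - ‖q 0‖ ^ 2) := by
  have h0mem : (0 : ℂ) ∈ ball (0 : ℂ) 1 := mem_ball_self one_pos
  set a : ℂ := q 0 with ha_def
  have ha : ‖a‖ < 1 := mem_ball_zero_iff.1 (hmap 0 h0mem)
  set d : ℂ → ℂ := fun z => 1 - (starRingEnd ℂ) a * q z with hd_def
  have hqlt : ∀ z ∈ ball (0 : ℂ) 1, ‖q z‖ < 1 := fun z hz => mem_ball_zero_iff.1 (hmap z hz)
  have hdne : ∀ z ∈ ball (0 : ℂ) 1, d z ≠ 0 := by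
    intro z hz h
    have : (starRingEnd ℂ) a * q z = 1 := by
      have := sub_eq_zero.1 h; linear_combination -this
    have h1 : ‖(starRingEnd ℂ) a * q z‖ < 1 := by
      rw [norm_mul, RCLike.norm_conj]
      nlinarith [norm_nonneg a, norm_nonneg (q z), hqlt z hz]
    rw [this] at h1; simp at h1
  have hddiff : ∀ z ∈ ball (0 : ℂ) 1, DifferentiableAt ℂ d z := fun z hz =>
    (differentiableAt_const _).sub ((hdiff z hz).const_mul _)
  set F : ℂ → ℂ := fun z => (q z - a) / d z with hF_def
  have hFdiff : ∀ z ∈ ball (0 : ℂ) 1, DifferentiableAt ℂ F z := fun z hz =>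
    ((hdiff z hz).sub_const a).div (hddiff z hz) (hdne z hz)
  have hFle : ∀ z ∈ ball (0 : ℂ) 1, ‖F z‖ ≤ 1 := by
    intro z hz
    rw [hF_def]
    simp only [norm_div]
    rw [div_le_one (norm_pos_iff.2 (hdne z hz))]
    exact mobius_norm_le ha (hqlt z hz)
  have hF2 : ‖iteratedDeriv 2 F 0‖ ≤ 2 := cauchy_second_deriv_bound hFdiff hFle
  -- q z = a + F z * d z on the ball
  have hid : ∀ z ∈ ball (0 : ℂ) 1, q z = a + F z * d z := by
    intro z hz
    rw [hF_def]
    field_simp [hdne z hz]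
    ring
  -- deriv F 0 = 0
  have hqd0 : HasDerivAt q 0 0 := by
    have := (hdiff 0 h0mem).hasDerivAt
    rwa [hq'] at this
  have hdd0 : HasDerivAt d (-((starRingEnd ℂ) a * 0)) 0 :=
    ((hqd0.const_mul ((starRingEnd ℂ) a)).const_sub 1)
  have hF'0 : deriv F 0 = 0 := by
    have h := ((hqd0.sub_const a).div hdd0 (hdne 0 h0mem)).deriv
    rw [show F = (fun x => q x - a) / d from rfl, h]
    simp [ha_def]
  -- analyticity to get second-order differentiability
  have hqDO : DifferentiableOn ℂ q (ball (0:ℂ) 1) :=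
    fun z hz => (hdiff z hz).differentiableWithinAt
  have hFDO : DifferentiableOn ℂ F (ball (0:ℂ) 1) :=
    fun z hz => (hFdiff z hz).differentiableWithinAt
  have hqAn : AnalyticOnNhd ℂ q (ball (0:ℂ) 1) := hqDO.analyticOnNhd isOpen_ball
  have hFAn : AnalyticOnNhd ℂ F (ball (0:ℂ) 1) := hFDO.analyticOnNhd isOpen_ball
  have hq'diff : DifferentiableAt ℂ (deriv q) 0 := (hqAn.deriv 0 h0mem).differentiableAt
  have hF'diff : DifferentiableAt ℂ (deriv F) 0 := (hFAn.deriv 0 h0mem).differentiableAt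
  -- first derivative identity
  set g : ℂ → ℂ := fun z => deriv F z * d z + F z * (-((starRingEnd ℂ) a) * deriv q z) with hg_def
  have hderiv_id : ∀ z ∈ ball (0 : ℂ) 1, deriv q z = g z := by
    intro z hz
    have hFz : HasDerivAt F (deriv F z) z := (hFdiff z hz).hasDerivAt
    have hqz : HasDerivAt q (deriv q z) z := (hdiff z hz).hasDerivAt
    have hdz : HasDerivAt d (-((starRingEnd ℂ) a) * deriv q z) z := by
      have := (hqz.const_mul ((starRingEnd ℂ) a)).const_sub 1
      rw [neg_mul]; exact this
    have hrhs : HasDerivAt (fun w => a + F w * d w)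
        (deriv F z * d z + F z * (-((starRingEnd ℂ) a) * deriv q z)) z :=
      (hFz.mul hdz).const_add a
    have heq : q =ᶠ[nhds z] fun w => a + F w * d w := by
      filter_upwards [isOpen_ball.mem_nhds hz] with w hw
      exact hid w hw
    have hq2 : HasDerivAt q
        (deriv F z * d z + F z * (-((starRingEnd ℂ) a) * deriv q z)) z :=
      hrhs.congr_of_eventuallyEq heq
    exact (hqz.unique hq2)
  -- differentiate the identity once more at 0
  have hq'eqg : deriv q =ᶠ[nhds 0] g := by
    filter_upwards [isOpen_ball.mem_nhds h0mem] with w hw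
    exact hderiv_id w hw
  have hF00 : F 0 = 0 := by simp [hF_def, ha_def]
  have h1 : HasDerivAt (deriv F) (deriv (deriv F) 0) 0 := hF'diff.hasDerivAt
  have h2 : HasDerivAt d 0 0 := by simpa using hdd0
  have h3 : HasDerivAt F 0 0 := by
    have := (hFdiff 0 h0mem).hasDerivAt
    rwa [hF'0] at this
  have h4 : HasDerivAt (fun z => -((starRingEnd ℂ) a) * deriv q z)
      (-((starRingEnd ℂ) a) * deriv (deriv q) 0) 0 := (hq'diff.hasDerivAt).const_mul _
  have hg : HasDerivAt g
      ((deriv (deriv F) 0 * d 0 + deriv F 0 * 0) +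
        (0 * (-((starRingEnd ℂ) a) * deriv q 0) +
          F 0 * (-((starRingEnd ℂ) a) * deriv (deriv q) 0))) 0 := (h1.mul h2).add (h3.mul h4)
  have hgval : deriv g 0 = deriv (deriv F) 0 * d 0 := by
    rw [hg.deriv, hF00]
    ring
  have hsecond : deriv (deriv q) 0 = deriv (deriv F) 0 * d 0 := by
    rw [hq'eqg.deriv_eq, hgval]
  have hiter2 : ∀ f : ℂ → ℂ, iteratedDeriv 2 f 0 = deriv (deriv f) 0 := by
    intro f
    rw [show (2:ℕ) = 1 + 1 from rfl, iteratedDeriv_succ, iteratedDeriv_one]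
  have hd0norm : ‖d 0‖ = 1 - ‖a‖ ^ 2 := by
    have : d 0 = ((1 - ‖a‖ ^ 2 : ℝ) : ℂ) := by
      have hc : (starRingEnd ℂ) a * a = ((‖a‖ ^ 2 : ℝ) : ℂ) := by
        rw [mul_comm, Complex.mul_conj]
        norm_cast
        rw [Complex.normSq_eq_norm_sq]
      simp only [hd_def]
      rw [← ha_def, hc]
      push_cast
      ring
    rw [this, Complex.norm_real, Real.norm_of_nonneg (by nlinarith [norm_nonneg a])]
  have : ‖iteratedDeriv 2 q 0‖ = (1 - ‖a‖ ^ 2) * ‖iteratedDeriv 2 F 0‖ := by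
    rw [hiter2 q, hiter2 F, hsecond, norm_mul, hd0norm, mul_comm]
  rw [ha_def] at this ⊢
  rw [this]
  have ha' : ‖q 0‖ < 1 := ha
  have hnn : (0:ℝ) ≤ 1 - ‖q 0‖ ^ 2 := by nlinarith [norm_nonneg (q 0)]
  calc (1 - ‖q 0‖ ^ 2) * ‖iteratedDeriv 2 F 0‖ ≤ (1 - ‖q 0‖ ^ 2) * 2 :=
        mul_le_mul_of_nonneg_left hF2 hnn
    _ = 2 * (1 - ‖q 0‖ ^ 2) := by ring
end

section
/- Let f : D → ℝ be smooth, satisfying the minimal surface equation (1 + f_u²) f_vv - 2 f_u f_v f_uv + (1 + f_v²) f_uu = 0 on a neighborhood of 0 ∈ ℝ². If at the origin f_uu f_vv - f_uv² = 0, then f_uu(0) = f_vv(0) = f_uv(0) = 0. -/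
open Filter Topology

/-- Partial derivative with respect to the first variable. -/
noncomputable def pdu (f : ℝ → ℝ → ℝ) : ℝ → ℝ → ℝ := fun u v => deriv (fun x => f x v) u

/-- Partial derivative with respect to the second variable. -/
noncomputable def pdv (f : ℝ → ℝ → ℝ) : ℝ → ℝ → ℝ := fun u v => deriv (fun y => f u y) v

/-- The minimal surface equation at the point `(u, v)`:
`(1 + f_u²) f_vv - 2 f_u f_v f_uv + (1 + f_v²) f_uu = 0`. -/
def MinSurfEq (f : ℝ → ℝ → ℝ) (u v : ℝ) : Prop :=
  (1 + (pdu f u v) ^ 2) * pdv (pdv f) u v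
    - 2 * pdu f u v * pdv f u v * pdv (pdu f) u v
    + (1 + (pdv f u v) ^ 2) * pdu (pdu f) u v = 0

/-- If a smooth solution of the minimal surface equation has vanishing Gaussian
curvature numerator `f_uu f_vv - f_uv²` at the origin, then all second partial
derivatives vanish at the origin. -/
theorem second_derivs_vanish (f : ℝ → ℝ → ℝ)
    (hf : ContDiff ℝ (⊤ : ℕ∞) (fun p : ℝ × ℝ => f p.1 p.2))
    (hmse : ∀ᶠ p : ℝ × ℝ in 𝓝 0, MinSurfEq f p.1 p.2)
    (hdet : pdu (pdu f) 0 0 * pdv (pdv f) 0 0 - (pdv (pdu f) 0 0) ^ 2 = 0) :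
    pdu (pdu f) 0 0 = 0 ∧ pdv (pdv f) 0 0 = 0 ∧ pdv (pdu f) 0 0 = 0 := by
  have h0 : MinSurfEq f (0 : ℝ) (0 : ℝ) := hmse.self_of_nhds
  unfold MinSurfEq at h0
  set A := pdu (pdu f) 0 0
  set C := pdv (pdv f) 0 0
  set B := pdv (pdu f) 0 0
  set p := pdu f 0 0
  set q := pdv f 0 0
  have hAC : A + C = 0 := by
    nlinarith [sq_nonneg (q*A - p*B), sq_nonneg (q*B - p*C), sq_nonneg (A + C), sq_nonneg B]
  refine ⟨?_, ?_, ?_⟩ <;> nlinarith [sq_nonneg A, sq_nonneg B, sq_nonneg C]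
end

section
/- Let a, b, c, A, B ∈ ℝ satisfy a c - b² = 0 with a, c ≥ 0, b = √(a c), and a(1 + B²) - 2 A B b + c(1 + A²) = 0. Then a = b = c = 0. -/
/-- Algebraic core of the vanishing of second derivatives at a zero-curvature
point: if `a c - b² = 0` with `a, c ≥ 0`, `b = √(a c)`, and
`a(1 + B²) - 2 A B b + c(1 + A²) = 0`, then `a = b = c = 0`. -/
theorem algebraic_core (a b c A B : ℝ)
    (ha : 0 ≤ a) (hc : 0 ≤ c)
    (hdet : a * c - b ^ 2 = 0)
    (hb : b = Real.sqrt (a * c))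
    (heq : a * (1 + B ^ 2) - 2 * A * B * b + c * (1 + A ^ 2) = 0) :
    a = 0 ∧ b = 0 ∧ c = 0 := by
  have hsa := Real.sq_sqrt ha
  have hsc := Real.sq_sqrt hc
  have hmul : b = Real.sqrt a * Real.sqrt c := by rw [hb, Real.sqrt_mul ha]
  rw [hmul] at heq
  have key := sq_nonneg (B * Real.sqrt a - A * Real.sqrt c)
  have ha0 : a = 0 := by nlinarith [key, hsa, hsc, sq_nonneg (Real.sqrt a), sq_nonneg (Real.sqrt c)]
  have hc0 : c = 0 := by nlinarith [key, hsa, hsc, sq_nonneg (Real.sqrt a), sq_nonneg (Real.sqrt c)]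
  refine ⟨ha0, ?_, hc0⟩
  rw [hb, ha0, zero_mul, Real.sqrt_zero]
end
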